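/- Let (Ω, P) be a probability space, X : Ω → ℝ^d a random vector, Y : Ω → {−1, 1} a random variable, and f* a fixed measurable function with f*(X) a version of E[Y | X], f*(X) ∈ L²(P). Let f : ℝ^d → ℝ be measurable with P(f(X) = 0) = 0 and f(X) ∈ L²(P). Then P(sign f(X) ≠ Y) − P(sign f*(X) ≠ Y) ≤ inf over t > 0 of (E[(t·f(X) − f*(X))²])^{1/2}. In particular, when E[f(X) f*(X)] > 0 this infimum equals ‖f*(X)‖_{L²(P)} · sin θ_{2,P}(f, f*). -/

import Mathlib

open MeasureTheory RealInnerProductSpace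

/-- sign: `1` if `z > 0`, `-1` if `z ≤ 0`. -/
noncomputable def sgn (z : ℝ) : ℝ := if 0 < z then 1 else -1

/-! Since `Y = ±1`, `P(sgn h(X) ≠ Y) = (1 - E[sgn h(X) · Y]) / 2`, and because `sgn h(X)` is a
bounded `σ(X)`-measurable variable, `Y` may be replaced by `f*(X)` in this expectation. The excess
risk is therefore `E[(sgn f*(X) - sgn f(X)) f*(X)] / 2`. The integrand vanishes unless `f(X)` and
`f*(X)` have opposite signs, and then it is at most `|t f(X) - f*(X)|` for every `t > 0`;
Jensen's inequality `E|Z| ≤ (E Z²)^(1/2)` turns the `L¹` bound into the `L²` one. The identity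
with the sine is the substitution `t ↦ ‖f*(X)‖ t`, available because
`E[f(X) f*(X)] > 0` forces `‖f*(X)‖ > 0`. -/

lemma measurable_sgn : Measurable sgn :=
  Measurable.ite (measurableSet_lt measurable_const measurable_id) measurable_const
    measurable_const

lemma abs_sgn (z : ℝ) : |sgn z| = 1 := by
  unfold sgn; split_ifs <;> simp

lemma sgn_mul_sub_sgn_mul_div_two_le_abs_sub {t : ℝ} (ht : 0 ≤ t) (a b : ℝ) :
    (sgn b * b - sgn a * b) / 2 ≤ |t * a - b| := by
  unfold sgn
  split_ifs with hb ha ha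
  · simp
  · nlinarith [neg_abs_le (t * a - b), mul_nonpos_of_nonneg_of_nonpos ht (not_lt.mp ha)]
  · nlinarith [le_abs_self (t * a - b), mul_nonneg ht ha.le]
  · simp

theorem iInf_pos_comp_mul_left {c : ℝ} (hc : 0 < c) (g : ℝ → ℝ) :
    ⨅ t : {t : ℝ // 0 < t}, g (c * t) = ⨅ t : {t : ℝ // 0 < t}, g t := by
  have hsurj : Function.Surjective
      fun t : {t : ℝ // 0 < t} => (⟨c * t, mul_pos hc t.2⟩ : {t : ℝ // 0 < t}) :=
    fun s => ⟨⟨s / c, div_pos s.2 hc⟩, Subtype.ext (mul_div_cancel₀ _ hc.ne')⟩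
  exact hsurj.iInf_comp fun t => g t

section

variable {Ω : Type*} {m m₀ : MeasurableSpace Ω} {μ : Measure Ω}

theorem integral_mul_condExp_of_bound [IsFiniteMeasure μ] (hm : m ≤ m₀) {g Y : Ω → ℝ}
    (hg : StronglyMeasurable[m] g) (hY : Integrable Y μ) (c : ℝ)
    (hg_bound : ∀ᵐ ω ∂μ, ‖g ω‖ ≤ c) :
    ∫ ω, g ω * μ[Y | m] ω ∂μ = ∫ ω, g ω * Y ω ∂μ := by
  rw [← integral_condExp hm (f := fun ω => g ω * Y ω)]
  exact integral_congr_ae (condExp_stronglyMeasurable_mul_of_bound hm hg hY c hg_bound).symm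

theorem integral_abs_le_integral_sq_rpow_half [IsProbabilityMeasure μ] {Z : Ω → ℝ}
    (hZ : MemLp Z 2 μ) : ∫ ω, |Z ω| ∂μ ≤ (∫ ω, Z ω ^ 2 ∂μ) ^ (1 / 2 : ℝ) := by
  have h := ProbabilityTheory.variance_eq_sub hZ.abs
  have := ProbabilityTheory.variance_nonneg |Z| μ
  simp only [Pi.pow_apply, Pi.abs_apply, sq_abs] at h
  rw [← Real.sqrt_eq_rpow]
  exact Real.le_sqrt_of_sq_le (by linarith)

theorem integral_const_mul_sq_rpow_half {c : ℝ} (hc : 0 ≤ c) (F : Ω → ℝ) :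
    (∫ ω, (c * F ω) ^ 2 ∂μ) ^ (1 / 2 : ℝ) = c * (∫ ω, F ω ^ 2 ∂μ) ^ (1 / 2 : ℝ) := by
  simp_rw [mul_pow, integral_const_mul, ← Real.sqrt_eq_rpow]
  rw [Real.sqrt_mul (sq_nonneg c), Real.sqrt_sq hc]

theorem integral_sq_pos_of_integral_mul_pos {A B : Ω → ℝ}
    (hB : Integrable (fun ω => B ω ^ 2) μ) (h : 0 < ∫ ω, A ω * B ω ∂μ) :
    0 < ∫ ω, B ω ^ 2 ∂μ := by
  refine (integral_nonneg fun ω => sq_nonneg (B ω)).lt_of_ne fun h0 => h.ne' ?_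
  have hB0 := (integral_eq_zero_iff_of_nonneg (fun ω => sq_nonneg (B ω)) hB).mp h0.symm
  refine integral_eq_zero_of_ae ?_
  filter_upwards [hB0] with ω hω
  simp [pow_eq_zero_iff two_ne_zero |>.mp hω]

end

section

variable {Ω : Type*} [MeasurableSpace Ω] {μ : Measure Ω}

theorem measureReal_sgn_ne_eq [IsProbabilityMeasure μ] {Y h : Ω → ℝ} (hY : Measurable Y)
    (hYval : ∀ ω, Y ω = 1 ∨ Y ω = -1) (hh : Measurable h) :
    μ.real {ω | sgn (h ω) ≠ Y ω} = (1 - ∫ ω, sgn (h ω) * Y ω ∂μ) / 2 := by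
  have hmeas : MeasurableSet {ω | sgn (h ω) ≠ Y ω} :=
    (measurableSet_eq_fun (measurable_sgn.comp hh) hY).compl
  have hint : Integrable (fun ω => sgn (h ω) * Y ω) μ := by
    refine .of_bound ((measurable_sgn.comp hh).mul hY).aestronglyMeasurable 1
      (.of_forall fun ω => ?_)
    rcases hYval ω with hy | hy <;> simp [hy, abs_sgn]
  have hpt : {ω | sgn (h ω) ≠ Y ω}.indicator 1 = fun ω => (1 - sgn (h ω) * Y ω) / 2 := by
    funext ω
    rcases hYval ω with hy | hy <;> by_cases hω : 0 < h ω <;>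
      simp [Set.indicator_apply, sgn, hω, hy] <;> norm_num
  rw [← integral_indicator_one hmeas, hpt, integral_div, integral_sub (integrable_const 1) hint,
    integral_const, probReal_univ, one_smul]

theorem integral_sgn_comp_mul_eq_of_condExp {E : Type*} [mE : MeasurableSpace E]
    [IsFiniteMeasure μ] {X : Ω → E} {Y g : Ω → ℝ} {h : E → ℝ} (hX : Measurable X)
    (hY : Integrable Y μ) (hcond : g =ᵐ[μ] μ[Y | mE.comap X]) (hh : Measurable h) :
    ∫ ω, sgn (h (X ω)) * Y ω ∂μ = ∫ ω, sgn (h (X ω)) * g ω ∂μ := by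
  have hsgn : StronglyMeasurable[mE.comap X] fun ω => sgn (h (X ω)) :=
    ((measurable_sgn.comp hh).comp (comap_measurable X)).stronglyMeasurable
  rw [← integral_mul_condExp_of_bound hX.comap_le hsgn hY 1 (.of_forall fun ω => by
    simp [abs_sgn])]
  exact integral_congr_ae (hcond.mono fun ω hω => by simp [hω])

theorem integral_sgn_mul_sub_div_two_le_integral_abs [IsFiniteMeasure μ] {A B : Ω → ℝ} {t : ℝ}
    (ht : 0 ≤ t) (hA : Measurable A) (hBm : Measurable B) (hB : Integrable B μ)
    (hZ : Integrable (fun ω => t * A ω - B ω) μ) :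
    (∫ ω, sgn (B ω) * B ω ∂μ - ∫ ω, sgn (A ω) * B ω ∂μ) / 2 ≤ ∫ ω, |t * A ω - B ω| ∂μ := by
  have hsgnB {C : Ω → ℝ} (hC : Measurable C) : Integrable (fun ω => sgn (C ω) * B ω) μ :=
    hB.bdd_mul (c := 1) (measurable_sgn.comp hC).aestronglyMeasurable (.of_forall fun ω => by
      simp [abs_sgn])
  rw [← integral_sub (hsgnB hBm) (hsgnB hA), ← integral_div]
  exact integral_mono ((hsgnB hBm).sub (hsgnB hA) |>.div_const 2) hZ.abs
    fun ω => sgn_mul_sub_sgn_mul_div_two_le_abs_sub ht (A ω) (B ω)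

end

theorem excess_risk_le_norm_mul_sin_general {d : ℕ} {Ω : Type*} [MeasurableSpace Ω]
    (P : Measure Ω) [IsProbabilityMeasure P]
    (X : Ω → EuclideanSpace ℝ (Fin d)) (hX : Measurable X)
    (Y : Ω → ℝ) (hY : Measurable Y) (hYval : ∀ ω, Y ω = 1 ∨ Y ω = -1)
    (fstar : EuclideanSpace ℝ (Fin d) → ℝ) (hfstar : Measurable fstar)
    (hcond : (fun ω => fstar (X ω)) =ᵐ[P] P[Y | MeasurableSpace.comap X inferInstance])
    (hfstarL2 : MemLp (fun ω => fstar (X ω)) 2 P)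
    (f : EuclideanSpace ℝ (Fin d) → ℝ) (hf : Measurable f)
    (hfL2 : MemLp (fun ω => f (X ω)) 2 P) :
    ((P {ω | sgn (f (X ω)) ≠ Y ω}).toReal - (P {ω | sgn (fstar (X ω)) ≠ Y ω}).toReal
      ≤ ⨅ t : {t : ℝ // 0 < t},
          (∫ ω, ((t : ℝ) * f (X ω) - fstar (X ω)) ^ 2 ∂P) ^ (1 / 2 : ℝ)) ∧
    (0 < ∫ ω, f (X ω) * fstar (X ω) ∂P →
      (⨅ t : {t : ℝ // 0 < t},
          (∫ ω, ((t : ℝ) * f (X ω) - fstar (X ω)) ^ 2 ∂P) ^ (1 / 2 : ℝ))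
        = (∫ ω, fstar (X ω) ^ 2 ∂P) ^ (1 / 2 : ℝ) *
            ⨅ t : {t : ℝ // 0 < t},
              (∫ ω, ((t : ℝ) * f (X ω)
                - fstar (X ω) / (∫ ω', fstar (X ω') ^ 2 ∂P) ^ (1 / 2 : ℝ)) ^ 2 ∂P)
                ^ (1 / 2 : ℝ)) := by
  have hYint : Integrable Y P := .of_bound hY.aestronglyMeasurable 1 (.of_forall fun ω => by
    rcases hYval ω with hy | hy <;> simp [hy])
  refine ⟨le_ciInf fun t => ?_, fun hpos => ?_⟩
  · have hrisk {h : EuclideanSpace ℝ (Fin d) → ℝ} (hh : Measurable h) :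
        (P {ω | sgn (h (X ω)) ≠ Y ω}).toReal
          = (1 - ∫ ω, sgn (h (X ω)) * fstar (X ω) ∂P) / 2 := by
      rw [← measureReal_def, measureReal_sgn_ne_eq hY hYval (hh.fun_comp hX),
        integral_sgn_comp_mul_eq_of_condExp hX hYint hcond hh]
    have hZ : MemLp (fun ω => t * f (X ω) - fstar (X ω)) 2 P := (hfL2.const_mul t).sub hfstarL2
    calc _ = (∫ ω, sgn (fstar (X ω)) * fstar (X ω) ∂P
          - ∫ ω, sgn (f (X ω)) * fstar (X ω) ∂P) / 2 := by rw [hrisk hf, hrisk hfstar]; ring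
      _ ≤ ∫ ω, |t * f (X ω) - fstar (X ω)| ∂P :=
        integral_sgn_mul_sub_div_two_le_integral_abs t.2.le (hf.comp hX) (hfstar.comp hX)
          (hfstarL2.integrable one_le_two) (hZ.integrable one_le_two)
      _ ≤ _ := integral_abs_le_integral_sq_rpow_half hZ
  · set c := (∫ ω, fstar (X ω) ^ 2 ∂P) ^ (1 / 2 : ℝ)
    have hc : 0 < c :=
      Real.rpow_pos_of_pos (integral_sq_pos_of_integral_mul_pos hfstarL2.integrable_sq hpos) _
    rw [Real.mul_iInf_of_nonneg hc.le, ← iInf_pos_comp_mul_left hc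
      fun s => (∫ ω, (s * f (X ω) - fstar (X ω)) ^ 2 ∂P) ^ (1 / 2 : ℝ)]
    refine iInf_congr fun t => ?_
    rw [← integral_const_mul_sq_rpow_half hc.le]
    congr 2 with ω
    field_simp

/-- The excess classification risk of `f` is bounded by
`inf_{t > 0} ‖t f(X) − f*(X)‖_{L²}`; when `E[f(X) f*(X)] > 0` this infimum equals
`‖f*(X)‖_{L²} · sin θ_{2,P}(f, f*)`, where `sin θ_{2,P}(f, f*)` is by definition
`inf_{t > 0} ‖t f(X) − f*(X)/‖f*(X)‖_{L²}‖_{L²}`. -/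
theorem excess_risk_le_norm_mul_sin {d : ℕ} {Ω : Type*} [MeasurableSpace Ω]
    (P : Measure Ω) [IsProbabilityMeasure P]
    (X : Ω → EuclideanSpace ℝ (Fin d)) (hX : Measurable X)
    (Y : Ω → ℝ) (hY : Measurable Y) (hYval : ∀ ω, Y ω = 1 ∨ Y ω = -1)
    (fstar : EuclideanSpace ℝ (Fin d) → ℝ) (hfstar : Measurable fstar)
    (hcond : (fun ω => fstar (X ω)) =ᵐ[P] P[Y | MeasurableSpace.comap X inferInstance])
    (hfstarL2 : MemLp (fun ω => fstar (X ω)) 2 P)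
    (f : EuclideanSpace ℝ (Fin d) → ℝ) (hf : Measurable f)
    (hf0 : P {ω | f (X ω) = 0} = 0) (hfL2 : MemLp (fun ω => f (X ω)) 2 P) :
    ((P {ω | sgn (f (X ω)) ≠ Y ω}).toReal - (P {ω | sgn (fstar (X ω)) ≠ Y ω}).toReal
      ≤ ⨅ t : {t : ℝ // 0 < t},
          (∫ ω, ((t : ℝ) * f (X ω) - fstar (X ω)) ^ 2 ∂P) ^ (1 / 2 : ℝ)) ∧
    (0 < ∫ ω, f (X ω) * fstar (X ω) ∂P →
      (⨅ t : {t : ℝ // 0 < t},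
          (∫ ω, ((t : ℝ) * f (X ω) - fstar (X ω)) ^ 2 ∂P) ^ (1 / 2 : ℝ))
        = (∫ ω, fstar (X ω) ^ 2 ∂P) ^ (1 / 2 : ℝ) *
            ⨅ t : {t : ℝ // 0 < t},
              (∫ ω, ((t : ℝ) * f (X ω)
                - fstar (X ω) / (∫ ω', fstar (X ω') ^ 2 ∂P) ^ (1 / 2 : ℝ)) ^ 2 ∂P)
                ^ (1 / 2 : ℝ)) :=
  excess_risk_le_norm_mul_sin_general P X hX Y hY hYval fstar hfstar hcond hfstarL2 f hf hfL2
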